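/- Let (Ω, 𝒜, P) be a probability space, H a measurable space, E a real normed vector space, and n ≥ 1. Let X₁, …, Xₙ : Ω → H be independent, identically distributed measurable random elements with common law ν. Let F be a nonempty finite set of measurable functions g : H → E with cardinality N, and let g* : H → E be a fixed measurable function. Let ℓ : H × E → ℝ be measurable such that a ≤ ℓ(x, z) ≤ b for all (x, z) ∈ H × E (with a ≤ b), and such that for every x ∈ H the map z ↦ ℓ(x, z) is λ-Lipschitz. Then for every δ ∈ (0, 1), with probability at least 1 − δ the following holds simultaneously for every g ∈ F: |∫ ℓ(x, g(x)) dν(x) − (1/n) ∑_{i=1}^{n} ℓ(Xᵢ, g*(Xᵢ))| ≤ |a − b| · √(log(2N/δ)/(2n)) + λ · (1/n) ∑_{i=1}^{n} ‖g(Xᵢ) − g*(Xᵢ)‖. -/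

import Mathlib

/-!
For a fixed `g`, the losses `ℓ (Xᵢ, g Xᵢ)` are independent, take values in `[a, b]` and have
mean `∫ ℓ (x, g x) ∂ν`; by Hoeffding's lemma their centred sum is sub-Gaussian with parameter
`n (b - a)² / 4`, so the empirical risk of `g` is farther than `|a - b| √(log (2N/δ) / (2n))`
from its population risk with probability at most `δ / N`. A union bound over the `N` functions
of `F` makes all these deviations small at once with probability at least `1 - δ`, and on that
event the triangle inequality together with `|ℓ (x, g x) - ℓ (x, g* x)| ≤ λ ‖g x - g* x‖`
replaces the empirical risk of `g` by that of `g*`.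
-/

open MeasureTheory ProbabilityTheory Finset Real
open scoped NNReal

namespace ProbabilityTheory.HasSubgaussianMGF

variable {Ω : Type*} [MeasurableSpace Ω] {μ : Measure Ω} [IsFiniteMeasure μ] {X : Ω → ℝ}
  {c : ℝ≥0}

lemma measureReal_abs_ge_le (h : HasSubgaussianMGF X c μ) {ε : ℝ} (hε : 0 ≤ ε) :
    μ.real {ω | ε ≤ |X ω|} ≤ 2 * exp (-ε ^ 2 / (2 * c)) := by
  have hsplit : {ω | ε ≤ |X ω|} ⊆ {ω | ε ≤ X ω} ∪ {ω | ε ≤ (-X) ω} := by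
    intro ω (hω : ε ≤ |X ω|)
    rcases le_abs'.1 hω with h | h
    · exact Or.inr (show ε ≤ -X ω by linarith)
    · exact Or.inl h
  calc μ.real {ω | ε ≤ |X ω|}
      ≤ μ.real {ω | ε ≤ X ω} + μ.real {ω | ε ≤ (-X) ω} :=
        (measureReal_mono hsplit).trans (measureReal_union_le _ _)
    _ ≤ 2 * exp (-ε ^ 2 / (2 * c)) := by
        linarith [h.measure_ge_le hε, h.neg.measure_ge_le hε]

lemma measureReal_abs_gt_sqrt_log_le (h : HasSubgaussianMGF X c μ) {δ : ℝ} (hδ : 0 < δ)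
    (hδ2 : δ ≤ 2) : μ.real {ω | √(2 * c * log (2 / δ)) < |X ω|} ≤ δ := by
  rcases eq_zero_or_pos c with rfl | hc
  -- the Chernoff bound degenerates to `2` here (`x / 0 = 0`), but `X = 0` almost surely
  · have hnull : μ {ω | √(2 * (0 : ℝ≥0) * log (2 / δ)) < |X ω|} = 0 :=
      measure_eq_zero_iff_ae_notMem.2 <| by
        filter_upwards [h.ae_eq_zero_of_hasSubgaussianMGF_zero] with ω hω
        simp [hω]
    simp only [Measure.real, hnull, ENNReal.toReal_zero]
    exact hδ.le
  have hlog : 0 ≤ log (2 / δ) := log_nonneg <| by rw [le_div_iff₀ hδ]; linarith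
  calc μ.real {ω | √(2 * c * log (2 / δ)) < |X ω|}
      ≤ μ.real {ω | √(2 * c * log (2 / δ)) ≤ |X ω|} :=
        measureReal_mono fun _ hω => Set.mem_ofPred.2 (le_of_lt hω)
    _ ≤ 2 * exp (-√(2 * c * log (2 / δ)) ^ 2 / (2 * c)) :=
        h.measureReal_abs_ge_le (sqrt_nonneg _)
    _ = δ := by
        rw [sq_sqrt (by positivity), neg_div, mul_div_cancel_left₀ _ (by positivity), exp_neg,
          exp_log (by positivity)]
        field_simp

end ProbabilityTheory.HasSubgaussianMGF

theorem ProbabilityTheory.measureReal_abs_sum_sub_integral_gt_le {Ω ι : Type*}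
    [MeasurableSpace Ω] {μ : Measure Ω} [IsProbabilityMeasure μ] {Y : ι → Ω → ℝ}
    (hind : iIndepFun Y μ) (hmeas : ∀ i, AEMeasurable (Y i) μ) {a b : ℝ}
    (hY : ∀ i, ∀ᵐ ω ∂μ, Y i ω ∈ Set.Icc a b) (s : Finset ι) {δ : ℝ} (hδ : 0 < δ)
    (hδ2 : δ ≤ 2) :
    μ.real {ω | |b - a| * √(#s * log (2 / δ) / 2) < |∑ i ∈ s, (Y i ω - μ[Y i])|} ≤ δ := by
  have hind' : iIndepFun (fun i ω => Y i ω - μ[Y i]) μ :=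
    hind.comp (fun i (y : ℝ) => y - ∫ ω, Y i ω ∂μ) fun _ => measurable_sub_const _
  have hsum := HasSubgaussianMGF.sum_of_iIndepFun hind' (s := s)
    fun i _ => hasSubgaussianMGF_of_mem_Icc (hmeas i) (hY i)
  have hparam : |b - a| * √(#s * log (2 / δ) / 2) =
      √(2 * ((∑ i ∈ s, (‖b - a‖₊ / 2) ^ 2 : ℝ≥0) : ℝ) * log (2 / δ)) := by
    rw [← sqrt_sq_eq_abs, ← sqrt_mul (sq_nonneg _)]
    congr 1
    push_cast
    rw [sum_const, nsmul_eq_mul, Real.norm_eq_abs, div_pow, sq_abs]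
    ring
  rw [hparam]
  exact hsum.measureReal_abs_gt_sqrt_log_le hδ hδ2

theorem ProbabilityTheory.measureReal_abs_integral_sub_empiricalMean_gt_le {Ω H ι : Type*}
    [MeasurableSpace Ω] {μ : Measure Ω} [IsProbabilityMeasure μ] [MeasurableSpace H]
    [Fintype ι] [Nonempty ι] {X : ι → Ω → H} (hXmeas : ∀ i, Measurable (X i))
    (hXindep : iIndepFun X μ) {ν : Measure H} (hXlaw : ∀ i, μ.map (X i) = ν) {f : H → ℝ}
    (hf : Measurable f) {a b : ℝ} (hfab : ∀ x, f x ∈ Set.Icc a b) {δ : ℝ} (hδ : 0 < δ)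
    (hδ2 : δ ≤ 2) :
    μ.real {ω | |b - a| * √(log (2 / δ) / (2 * Fintype.card ι)) <
      |∫ x, f x ∂ν - (1 / (Fintype.card ι : ℝ)) * ∑ i, f (X i ω)|} ≤ δ := by
  set n : ℝ := (Fintype.card ι : ℝ)
  have hn : 0 < n := by positivity
  have hmean (i : ι) : μ[fun ω => f (X i ω)] = ∫ x, f x ∂ν := by
    rw [← hXlaw i, integral_map (hXmeas i).aemeasurable hf.aestronglyMeasurable]
  have hdev (ω : Ω) : ∫ x, f x ∂ν - (1 / n) * ∑ i, f (X i ω) =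
      -((1 / n) * ∑ i, (f (X i ω) - μ[fun ω => f (X i ω)])) := by
    simp only [hmean, sum_sub_distrib, sum_const, card_univ, nsmul_eq_mul]
    field_simp
    ring
  have hthr : |b - a| * √(log (2 / δ) / (2 * n)) =
      (1 / n) * (|b - a| * √(n * log (2 / δ) / 2)) := by
    rw [show n * log (2 / δ) / 2 = n ^ 2 * (log (2 / δ) / (2 * n)) by field_simp,
      sqrt_mul (sq_nonneg n), sqrt_sq hn.le]
    field_simp
  have hoeffding := measureReal_abs_sum_sub_integral_gt_le
    (hXindep.comp (fun _ => f) fun _ => hf) (fun i => (hf.comp (hXmeas i)).aemeasurable)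
    (fun i => ae_of_all _ fun ω => hfab (X i ω)) univ hδ hδ2
  rw [card_univ] at hoeffding
  refine Eq.trans_le (congrArg μ.real (Set.ext fun ω => ?_)) hoeffding
  simp only [Set.mem_ofPred_eq, Function.comp_apply]
  rw [hdev, hthr, abs_neg, abs_mul, abs_of_pos (one_div_pos.2 hn),
    mul_lt_mul_iff_right₀ (one_div_pos.2 hn)]

theorem MeasureTheory.ofReal_one_sub_le_measure_compl_biUnion {Ω ι : Type*}
    [MeasurableSpace Ω] {μ : Measure Ω} [IsProbabilityMeasure μ] (F : Finset ι)
    (s : ι → Set Ω) {δ : ℝ} (hδ : 0 ≤ δ) (hs : ∀ i ∈ F, μ.real (s i) ≤ δ / #F) :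
    ENNReal.ofReal (1 - δ) ≤ μ (⋃ i ∈ F, s i)ᶜ := by
  have hunion : μ.real (⋃ i ∈ F, s i) ≤ δ := calc
    μ.real (⋃ i ∈ F, s i) ≤ ∑ i ∈ F, μ.real (s i) := measureReal_biUnion_finset_le F s
    _ ≤ ∑ _i ∈ F, δ / #F := sum_le_sum hs
    _ ≤ δ := by
      rw [sum_const, nsmul_eq_mul]
      rcases F.eq_empty_or_nonempty with rfl | hF
      · simpa using hδ
      · rw [mul_div_cancel₀ _ (by positivity)]
  calc ENNReal.ofReal (1 - δ) = 1 - ENNReal.ofReal δ := by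
        rw [ENNReal.ofReal_sub _ hδ, ENNReal.ofReal_one]
    _ ≤ 1 - μ (⋃ i ∈ F, s i) := by
        gcongr
        exact (ofReal_measureReal (measure_ne_top _ _)).symm.le.trans
          (ENNReal.ofReal_le_ofReal hunion)
    _ ≤ μ (⋃ i ∈ F, s i)ᶜ := by
        rw [tsub_le_iff_left, ← measure_univ (μ := μ)]
        exact measure_univ_le_add_compl _

lemma abs_sub_mul_sum_le_of_lipschitzWith {ι α : Type*} [PseudoMetricSpace α] (s : Finset ι)
    {K : ℝ≥0} {f : ι → α → ℝ} (hf : ∀ i, LipschitzWith K (f i)) (u v : ι → α) {r c t : ℝ}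
    (hc : 0 ≤ c) (h : |r - c * ∑ i ∈ s, f i (u i)| ≤ t) :
    |r - c * ∑ i ∈ s, f i (v i)| ≤ t + K * (c * ∑ i ∈ s, dist (u i) (v i)) := by
  have hlip : |∑ i ∈ s, f i (u i) - ∑ i ∈ s, f i (v i)| ≤ K * ∑ i ∈ s, dist (u i) (v i) := by
    rw [← sum_sub_distrib, mul_sum]
    refine (abs_sum_le_sum_abs _ _).trans (sum_le_sum fun i _ => ?_)
    simpa [Real.dist_eq] using (hf i).dist_le_mul (u i) (v i)
  calc |r - c * ∑ i ∈ s, f i (v i)|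
      ≤ |r - c * ∑ i ∈ s, f i (u i)| + |c * ∑ i ∈ s, f i (u i) - c * ∑ i ∈ s, f i (v i)| :=
        abs_sub_le _ _ _
    _ ≤ t + K * (c * ∑ i ∈ s, dist (u i) (v i)) := by
        rw [← mul_sub, abs_mul, abs_of_nonneg hc, mul_left_comm (K : ℝ)]
        exact add_le_add h (mul_le_mul_of_nonneg_left hlip hc)

theorem masked_contrastive_generalization_bound_general
    {Ω : Type*} [MeasureSpace Ω] [IsProbabilityMeasure (ℙ : Measure Ω)]
    {H : Type*} [MeasurableSpace H]
    {E : Type*} [NormedAddCommGroup E]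
    [MeasurableSpace E]
    {n : ℕ} (hn : 1 ≤ n)
    (X : Fin n → Ω → H) (hXmeas : ∀ i, Measurable (X i))
    (hXindep : iIndepFun X ℙ)
    (ν : Measure H) (hXlaw : ∀ i, Measure.map (X i) ℙ = ν)
    (F : Finset (H → E)) (hFmeas : ∀ g ∈ F, Measurable g)
    (N : ℕ) (hN : F.card = N)
    (gstar : H → E)
    (ℓ : H × E → ℝ) (hℓmeas : Measurable ℓ)
    (a b : ℝ)
    (hℓbound : ∀ x z, a ≤ ℓ (x, z) ∧ ℓ (x, z) ≤ b)
    (lam : NNReal) (hℓlip : ∀ x : H, LipschitzWith lam (fun z => ℓ (x, z)))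
    (δ : ℝ) (hδ : δ ∈ Set.Ioo (0 : ℝ) 1) :
    ENNReal.ofReal (1 - δ) ≤
      ℙ {ω | ∀ g ∈ F,
        |∫ x, ℓ (x, g x) ∂ν - (1 / (n : ℝ)) * ∑ i, ℓ (X i ω, gstar (X i ω))| ≤
          |a - b| * Real.sqrt (Real.log (2 * N / δ) / (2 * n)) +
            (lam : ℝ) * ((1 / (n : ℝ)) * ∑ i, ‖g (X i ω) - gstar (X i ω)‖)} := by
  have : NeZero n := ⟨by omega⟩
  set t := |a - b| * √(log (2 * N / δ) / (2 * n))
  set bad : (H → E) → Set Ω := fun g =>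
    {ω | t < |∫ x, ℓ (x, g x) ∂ν - (1 / (n : ℝ)) * ∑ i, ℓ (X i ω, g (X i ω))|}
  refine (ofReal_one_sub_le_measure_compl_biUnion F bad hδ.1.le fun g hg => ?_).trans
    (measure_mono fun ω hω g hg => ?_)
  · rw [hN]
    have hN0 : (0 : ℝ) < N := by exact_mod_cast hN ▸ card_pos.2 ⟨g, hg⟩
    have hoeffding := measureReal_abs_integral_sub_empiricalMean_gt_le hXmeas hXindep hXlaw
      (f := fun x => ℓ (x, g x)) (hℓmeas.comp (measurable_id.prodMk (hFmeas g hg)))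
      (fun x => hℓbound x (g x)) (div_pos hδ.1 hN0)
      ((div_le_self hδ.1.le (by exact_mod_cast hN0)).trans (by linarith [hδ.2]))
    rwa [Fintype.card_fin, abs_sub_comm b a, div_div_eq_mul_div] at hoeffding
  · have hdev : |∫ x, ℓ (x, g x) ∂ν - (1 / (n : ℝ)) * ∑ i, ℓ (X i ω, g (X i ω))| ≤ t :=
      not_lt.1 fun h => hω (Set.mem_biUnion hg h)
    simpa only [dist_eq_norm] using abs_sub_mul_sum_le_of_lipschitzWith univ
      (fun i => hℓlip (X i ω)) (fun i => g (X i ω)) (fun i => gstar (X i ω))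
      (by positivity) hdev

/-- Generalization bound for masked contrastive learning (Theorem 1): with probability at
least `1 - δ`, simultaneously for every `g` in the finite function class `F` of size `N`,
the population risk of `g` differs from the empirical risk evaluated at the optimal map
`gstar` by at most a Hoeffding-type uniform deviation term `|a - b| * √(log(2N/δ)/(2n))`
plus `λ` times the empirical representation discrepancy `(1/n) ∑ᵢ ‖g(Xᵢ) - gstar(Xᵢ)‖`. -/
theorem masked_contrastive_generalization_bound
    {Ω : Type*} [MeasureSpace Ω] [IsProbabilityMeasure (ℙ : Measure Ω)]
    {H : Type*} [MeasurableSpace H]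
    {E : Type*} [NormedAddCommGroup E] [NormedSpace ℝ E]
    [MeasurableSpace E] [BorelSpace E]
    {n : ℕ} (hn : 1 ≤ n)
    (X : Fin n → Ω → H) (hXmeas : ∀ i, Measurable (X i))
    (hXindep : iIndepFun X ℙ)
    (ν : Measure H) (hXlaw : ∀ i, Measure.map (X i) ℙ = ν)
    (F : Finset (H → E)) (hFne : F.Nonempty) (hFmeas : ∀ g ∈ F, Measurable g)
    (N : ℕ) (hN : F.card = N)
    (gstar : H → E) (hgstar : Measurable gstar)
    (ℓ : H × E → ℝ) (hℓmeas : Measurable ℓ)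
    (a b : ℝ) (hab : a ≤ b)
    (hℓbound : ∀ x z, a ≤ ℓ (x, z) ∧ ℓ (x, z) ≤ b)
    (lam : NNReal) (hℓlip : ∀ x : H, LipschitzWith lam (fun z => ℓ (x, z)))
    (δ : ℝ) (hδ : δ ∈ Set.Ioo (0 : ℝ) 1) :
    ENNReal.ofReal (1 - δ) ≤
      ℙ {ω | ∀ g ∈ F,
        |∫ x, ℓ (x, g x) ∂ν - (1 / (n : ℝ)) * ∑ i, ℓ (X i ω, gstar (X i ω))| ≤
          |a - b| * Real.sqrt (Real.log (2 * N / δ) / (2 * n)) +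
            (lam : ℝ) * ((1 / (n : ℝ)) * ∑ i, ‖g (X i ω) - gstar (X i ω)‖)} :=
  masked_contrastive_generalization_bound_general hn X hXmeas hXindep ν hXlaw F hFmeas N hN gstar ℓ
    hℓmeas a b hℓbound lam hℓlip δ hδ
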